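/- Let G be a weak dual equivalence graph of type n+1 all of whose n-components are dual equivalence graphs, and let φ : G → G_λ be a surjective morphism restricting to an isomorphism on n-components. Then no two n-components of G that are both isomorphic to G_μ (for the same partition μ of n) are joined by an edge of color n−1... i.e., if C and D are distinct n-components with φ(C) = φ(D) = G_μ (same image), then there is no (n−1)-colored edge between a vertex of C and a vertex of D. -/

import Mathlib

open scoped Classical

/-- The content (diagonal) of a cell `(r, c)` is `c - r` (English convention,
NW–SE diagonals). -/
def cellContent (c : ℕ × ℕ) : ℤ := (c.2 : ℤ) - (c.1 : ℤ)

/-- A standard Young tableau of shape `μ`: a filling of the cells of `μ` with the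
entries `1, …, μ.card`, bijectively, strictly increasing along rows and columns.
(Cells outside the diagram carry the junk value `0`.) -/
structure SYT (μ : YoungDiagram) where
  entry : ℕ × ℕ → ℕ
  bijOn : Set.BijOn entry (μ : Set (ℕ × ℕ)) (Set.Icc 1 μ.card)
  zero_of_not_mem : ∀ c, c ∉ μ → entry c = 0
  row_strict : ∀ a b : ℕ × ℕ, a ∈ μ → b ∈ μ → a.1 = b.1 → a.2 < b.2 → entry a < entry b
  col_strict : ∀ a b : ℕ × ℕ, a ∈ μ → b ∈ μ → a.2 = b.2 → a.1 < b.1 → entry a < entry b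

/-- `i` is a descent of `T`: `i` is located in a (strictly) higher row than `i+1`. -/
def SYT.Desc {μ : YoungDiagram} (T : SYT μ) (i : ℕ) : Prop :=
  ∃ a b : ℕ × ℕ, a ∈ μ ∧ b ∈ μ ∧ T.entry a = i ∧ T.entry b = i + 1 ∧ a.1 < b.1

/-- `U` is obtained from `T` by the dual Knuth move exchanging `j` and `j+1`:
the exchange is permitted because some cell with entry `j-1` or `j+2` lies on a
diagonal strictly between the diagonals of `j` and `j+1`. -/
def SYT.DKSwap {μ : YoungDiagram} (T U : SYT μ) (j : ℕ) : Prop :=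
  1 ≤ j ∧ (∀ c : ℕ × ℕ, U.entry c = Equiv.swap j (j + 1) (T.entry c)) ∧
  ∃ a b w : ℕ × ℕ, a ∈ μ ∧ b ∈ μ ∧ w ∈ μ ∧
    T.entry a = j ∧ T.entry b = j + 1 ∧
    (T.entry w + 1 = j ∨ T.entry w = j + 2) ∧
    cellContent w ∈
      Set.Ioo (min (cellContent a) (cellContent b)) (max (cellContent a) (cellContent b))

/-- `T` and `U` are related by a dual Knuth move. -/
def SYT.DKEdge {μ : YoungDiagram} (T U : SYT μ) : Prop := ∃ j, T.DKSwap U j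

/-- The edge `(T,U)` activates the bond `a_i`: exactly one of the descent sets of
`T`, `U` contains `i`, and exactly the other contains `i+1`. -/
def SYT.Activ {μ : YoungDiagram} (T U : SYT μ) (i : ℕ) : Prop :=
  (T.Desc i ∧ ¬ U.Desc i ∧ U.Desc (i + 1) ∧ ¬ T.Desc (i + 1)) ∨
  (U.Desc i ∧ ¬ T.Desc i ∧ T.Desc (i + 1) ∧ ¬ U.Desc (i + 1))

/-- A signed colored graph of type `n+1`: a finite simple graph with
`τ : V → 2^{1,…,n}` and edge labels `β ⊆ {a_1, …, a_{n-1}}` (the color `i`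
stands for `a_i`). -/
structure SCG (n : ℕ) (V : Type) where
  E : V → V → Prop
  τ : V → Set ℕ
  β : V → V → Set ℕ
  symm : ∀ u v, E u v → E v u
  irrefl : ∀ v, ¬ E v v
  τ_sub : ∀ v, τ v ⊆ Set.Icc 1 n
  β_sub : ∀ u v, β u v ⊆ Set.Icc 1 (n - 1)
  β_symm : ∀ u v, β u v = β v u
  β_empty : ∀ u v, ¬ E u v → β u v = ∅

/-- The standard dual equivalence graph `G_λ` as a signed colored graph of type
`n+1`: vertices are the standard Young tableaux of shape `λ`, edges are dual Knuth
moves, and the label of an edge is the set of bonds it activates. -/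
def stdSCG (n : ℕ) (lam : YoungDiagram) : SCG n (SYT lam) where
  E := fun T U => T ≠ U ∧ (T.DKEdge U ∨ U.DKEdge T)
  τ := fun T => {i | i ∈ Set.Icc 1 n ∧ T.Desc i}
  β := fun T U => {i | i ∈ Set.Icc 1 (n - 1) ∧
    (T ≠ U ∧ (T.DKEdge U ∨ U.DKEdge T)) ∧ T.Activ U i}
  symm := fun u v h => ⟨Ne.symm h.1, Or.symm h.2⟩
  irrefl := fun v h => h.1 rfl
  τ_sub := fun v i hi => hi.1
  β_sub := fun u v i hi => hi.1
  β_symm := by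
    intro u v
    ext i
    constructor <;> rintro ⟨h1, ⟨hne, he⟩, hact⟩ <;>
      exact ⟨h1, ⟨Ne.symm hne, Or.symm he⟩, Or.symm hact⟩
  β_empty := fun u v h =>
    Set.eq_empty_iff_forall_notMem.mpr fun i hi => h hi.2.1

/-- The `(k+1)`-restriction of a signed colored graph of type `n+1`: intersect
`τ` with `{1,…,k}` and `β` with `{a_1,…,a_{k-1}}`, keeping the edges whose
restricted label is nonempty. -/
def SCG.restrict {n : ℕ} {V : Type} (G : SCG n V) (k : ℕ) : SCG k V where
  E := fun u v => G.E u v ∧ (G.β u v ∩ Set.Icc 1 (k - 1)).Nonempty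
  τ := fun v => G.τ v ∩ Set.Icc 1 k
  β := fun u v => G.β u v ∩ Set.Icc 1 (k - 1)
  symm := fun u v h => ⟨G.symm u v h.1, by rw [G.β_symm v u]; exact h.2⟩
  irrefl := fun v h => G.irrefl v h.1
  τ_sub := fun v => Set.inter_subset_right
  β_sub := fun u v => Set.inter_subset_right
  β_symm := fun u v => by
    show G.β u v ∩ _ = G.β v u ∩ _
    rw [G.β_symm u v]
  β_empty := fun u v h => by
    by_cases he : G.E u v
    · exact Set.not_nonempty_iff_eq_empty.mp fun hne => h ⟨he, hne⟩
    · show G.β u v ∩ _ = ∅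
      rw [G.β_empty u v he]; exact Set.empty_inter _

/-- The subgraph induced on a set of vertices. -/
def SCG.induce {n : ℕ} {V : Type} (G : SCG n V) (A : Set V) : SCG n A where
  E := fun u v => G.E u.1 v.1
  τ := fun v => G.τ v.1
  β := fun u v => G.β u.1 v.1
  symm := fun u v h => G.symm u.1 v.1 h
  irrefl := fun v => G.irrefl v.1
  τ_sub := fun v => G.τ_sub v.1
  β_sub := fun u v => G.β_sub u.1 v.1
  β_symm := fun u v => G.β_symm u.1 v.1
  β_empty := fun u v => G.β_empty u.1 v.1

/-- The connected component of `v`. -/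
def SCG.comp {n : ℕ} {V : Type} (G : SCG n V) (v : V) : Set V :=
  {u | Relation.ReflTransGen G.E v u}

/-- The connected component of `v` using only edges with a color in `K`. -/
def SCG.compC {n : ℕ} {V : Type} (G : SCG n V) (K : Set ℕ) (v : V) : Set V :=
  {u | Relation.ReflTransGen (fun a b => G.E a b ∧ (G.β a b ∩ K).Nonempty) v u}

/-- Axiom 1: `w` admits an `i`-neighbor iff it lies on an `i`-colored edge, and
then the `i`-neighbor is unique. -/
def ax1 {n : ℕ} {V : Type} (G : SCG n V) : Prop :=
  ∀ i, 1 ≤ i → i ≤ n - 1 → ∀ w : V,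
    ((Xor' (i ∈ G.τ w) (i + 1 ∈ G.τ w)) ↔ ∃ x, G.E w x ∧ i ∈ G.β w x) ∧
    (∀ x y, G.E w x → i ∈ G.β w x → G.E w y → i ∈ G.β w y → x = y)

/-- Axiom 2: an `i`-colored edge switches `i` and `i+1` in the τ-invariant and
affects no labels besides `i-1, i, i+1, i+2`. -/
def ax2 {n : ℕ} {V : Type} (G : SCG n V) : Prop :=
  ∀ i, 1 ≤ i → i ≤ n - 1 → ∀ w x : V, G.E w x → i ∈ G.β w x →
    (i ∈ G.τ w ↔ i ∉ G.τ x) ∧ (i + 1 ∈ G.τ w ↔ i + 1 ∉ G.τ x) ∧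
    ∀ h, (h + 1 < i ∨ h > i + 2) → (h ∈ G.τ w ↔ h ∈ G.τ x)

/-- Axiom 3. -/
def ax3 {n : ℕ} {V : Type} (G : SCG n V) : Prop :=
  ∀ i, 1 ≤ i → i ≤ n - 1 → ∀ w x : V, G.E w x → i ∈ G.β w x →
    (i - 1 ∈ symmDiff (G.τ w) (G.τ x) → (i - 1 ∈ G.τ w ↔ i + 1 ∈ G.τ w)) ∧
    (i + 2 ∈ symmDiff (G.τ w) (G.τ x) → (i + 2 ∈ G.τ w ↔ i ∈ G.τ w))

/-- Axiom 4: every connected component of the subgraph of `{i,i+1}`-colored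
(resp. `{i,i+1,i+2}`-colored) edges has one of the allowed forms, i.e. is
isomorphic, matching edges and their colors, to such a component of a standard
dual equivalence graph. -/
def ax4 {n : ℕ} {V : Type} (G : SCG n V) : Prop :=
  (∀ i, 1 ≤ i → i < n - 2 → ∀ v : V,
    ∃ (lam : YoungDiagram) (_ : lam.card = n + 1) (T0 : SYT lam)
      (f : (G.compC {i, i + 1} v) ≃ ((stdSCG n lam).compC {i, i + 1} T0)),
      ∀ u w : G.compC {i, i + 1} v, ∀ c ∈ ({i, i + 1} : Set ℕ),
        (G.E u.1 w.1 ∧ c ∈ G.β u.1 w.1) ↔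
        ((stdSCG n lam).E (f u).1 (f w).1 ∧ c ∈ (stdSCG n lam).β (f u).1 (f w).1)) ∧
  (∀ i, 1 ≤ i → i < n - 3 → ∀ v : V,
    ∃ (lam : YoungDiagram) (_ : lam.card = n + 1) (T0 : SYT lam)
      (f : (G.compC {i, i + 1, i + 2} v) ≃ ((stdSCG n lam).compC {i, i + 1, i + 2} T0)),
      ∀ u w : G.compC {i, i + 1, i + 2} v, ∀ c ∈ ({i, i + 1, i + 2} : Set ℕ),
        (G.E u.1 w.1 ∧ c ∈ G.β u.1 w.1) ↔
        ((stdSCG n lam).E (f u).1 (f w).1 ∧ c ∈ (stdSCG n lam).β (f u).1 (f w).1))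

/-- Axiom 5: edges of colors at distance at least 3 commute. -/
def ax5 {n : ℕ} {V : Type} (G : SCG n V) : Prop :=
  ∀ i j : ℕ, (i + 3 ≤ j ∨ j + 3 ≤ i) → ∀ w x y : V,
    G.E w x → i ∈ G.β w x → G.E x y → j ∈ G.β x y →
    ∃ v : V, G.E w v ∧ j ∈ G.β w v ∧ G.E v y ∧ i ∈ G.β v y

/-- Axiom 6: inside a component of the subgraph of edges of colors `≤ i`, any two
components of the subgraph of edges of colors `≤ i-1` are joined by an edge of
color `i`. -/
def ax6 {n : ℕ} {V : Type} (G : SCG n V) : Prop :=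
  ∀ i, 2 ≤ i → i ≤ n - 1 → ∀ u v : V,
    v ∈ G.compC (Set.Icc 1 i) u → v ∉ G.compC (Set.Icc 1 (i - 1)) u →
    ∃ u' v' : V, u' ∈ G.compC (Set.Icc 1 (i - 1)) u ∧
      v' ∈ G.compC (Set.Icc 1 (i - 1)) v ∧ G.E u' v' ∧ i ∈ G.β u' v'

/-- A weak dual equivalence graph: axioms 1–5. -/
def IsWeakDEG {n : ℕ} {V : Type} (G : SCG n V) : Prop :=
  ax1 G ∧ ax2 G ∧ ax3 G ∧ ax4 G ∧ ax5 G

/-- A dual equivalence graph: axioms 1–6. -/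
def IsDEG {n : ℕ} {V : Type} (G : SCG n V) : Prop :=
  IsWeakDEG G ∧ ax6 G

/-!
Write `n = m + 2`, let `x – y` be an `(n-1)`-edge from the `n`-component `C` to the
`n`-component `D`, and suppose `f C = f D`. Then `f x` and `f y` lie in one `n`-component of `G_λ`,
where the entry `n + 1` cannot move, so the edge `f x – f y` exchanges `m + 1` and `m + 2`, and
the content of `m + 3` lies strictly between theirs. Hence some corner `e` of the subtableau of
entries `≤ m` also lies on a diagonal between them. Moving `m` to `e` uses only colors `≤ m - 2`,
which commute with the color `m + 1` by axiom 5; lifting this path to `C` drags the edge `x – y`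
along to an edge from `C` to `D` whose image exchanges `m + 1` and `m + 2` with the content of `m`
between theirs. That edge also carries the color `m = n - 2`, so `C` and `D` would coincide.
-/

/-- `Minimal (· ∉ A)` picks the addable cells and `Maximal (· ∈ A)` the removable corners of the
lower set `A`; the corner sought is the lowest cell of `A` in the column just left of `q`. -/
theorem exists_maximal_between {A : Set (ℕ × ℕ)} (hA : IsLowerSet A) {p q : ℕ × ℕ}
    (hp : Minimal (· ∉ A) p) (hq : Minimal (· ∉ A) q)
    (hpq : cellContent p + 2 ≤ cellContent q) :
    ∃ e, Maximal (· ∈ A) e ∧ cellContent p < cellContent e ∧ cellContent e < cellContent q := by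
  obtain ⟨rp, cp⟩ := p
  obtain ⟨rq, cq⟩ := q
  rw [minimal_iff_forall_lt] at hp hq
  simp only [cellContent, not_not] at hp hq hpq ⊢
  have hr : rq < rp := lt_of_not_ge fun h =>
    hp.1 (hq.2 (Prod.mk_lt_mk.2 (Or.inr ⟨h, by omega⟩)))
  have hc : cp < cq := lt_of_not_ge fun h =>
    hq.1 (hp.2 (Prod.mk_lt_mk.2 (Or.inl ⟨hr, h⟩)))
  have hrp : (rp, cq - 1) ∉ A := fun h => hp.1 (hA (Prod.mk_le_mk.2 ⟨le_rfl, by omega⟩) h)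
  have hex : ∃ r, (r, cq - 1) ∉ A := ⟨rp, hrp⟩
  have h₀ : (Nat.find hex, cq - 1) ∉ A := Nat.find_spec hex
  have hr₀ : rq < Nat.find hex := lt_of_not_ge fun h =>
    h₀ (hA (Prod.mk_le_mk.2 ⟨h, le_rfl⟩) (hq.2 (Prod.mk_lt_mk.2 (Or.inr ⟨le_rfl, by omega⟩))))
  have hr₀' : Nat.find hex ≤ rp := Nat.find_min' hex hrp
  refine ⟨(Nat.find hex - 1, cq - 1), maximal_iff_forall_gt.2 ⟨?_, ?_⟩, by omega, by omega⟩
  · exact not_not.1 (Nat.find_min hex (by omega))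
  · rintro ⟨y₁, y₂⟩ hy hyA
    rcases Prod.mk_lt_mk.1 hy with ⟨h₁, h₂⟩ | ⟨h₁, h₂⟩
    · exact h₀ (hA (Prod.mk_le_mk.2 ⟨by omega, h₂⟩) hyA)
    · exact hq.1 (hA (Prod.mk_le_mk.2 ⟨by omega, by omega⟩) hyA)

namespace SYT

variable {μ : YoungDiagram}

theorem ext {T U : SYT μ} (h : T.entry = U.entry) : T = U := by
  cases T; cases U; cases h; rfl

theorem one_le_entry (T : SYT μ) {c : ℕ × ℕ} (hc : c ∈ μ) : 1 ≤ T.entry c :=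
  (T.bijOn.mapsTo hc).1

theorem exists_entry_eq (T : SYT μ) {k : ℕ} (hk : 1 ≤ k) (hk' : k ≤ μ.card) :
    ∃ c ∈ μ, T.entry c = k :=
  T.bijOn.surjOn ⟨hk, hk'⟩

theorem eq_of_entry_eq (T : SYT μ) {a b : ℕ × ℕ} (ha : a ∈ μ) (hb : b ∈ μ)
    (h : T.entry a = T.entry b) : a = b :=
  T.bijOn.injOn ha hb h

theorem strictMonoOn_entry (T : SYT μ) : StrictMonoOn T.entry μ := by
  rintro ⟨a₁, a₂⟩ ha ⟨b₁, b₂⟩ hb hab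
  have hm : (a₁, b₂) ∈ μ := μ.up_left_mem (Prod.mk_le_mk.1 hab.le).1 le_rfl hb
  have hrow : a₂ < b₂ → T.entry (a₁, a₂) < T.entry (a₁, b₂) := T.row_strict _ _ ha hm rfl
  have hcol : a₁ < b₁ → T.entry (a₁, b₂) < T.entry (b₁, b₂) := T.col_strict _ _ hm hb rfl
  rcases Prod.mk_lt_mk.1 hab with ⟨h₁, h₂⟩ | ⟨h₁, h₂⟩
  · rcases h₂.lt_or_eq with h₂ | rfl
    · exact (hrow h₂).trans (hcol h₁)
    · exact hcol h₁
  · rcases h₁.lt_or_eq with h₁ | rfl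
    · exact (hrow h₂).trans (hcol h₁)
    · exact hrow h₂

theorem consecutive_cells (T : SYT μ) {a b : ℕ × ℕ} (ha : a ∈ μ) (hb : b ∈ μ)
    (hab : T.entry b = T.entry a + 1) :
    (a.1 < b.1 ∧ b.2 < a.2) ∨ (b.1 < a.1 ∧ a.2 < b.2) ∨
      b = (a.1 + 1, a.2) ∨ b = (a.1, a.2 + 1) := by
  have hcover : ∀ c ∈ μ, a < c → c ≤ b → c = b := fun c hc hac hcb =>
    hcb.eq_or_lt.resolve_right fun hcb' => by
      have := T.strictMonoOn_entry ha hc hac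
      have := T.strictMonoOn_entry hc hb hcb'
      omega
  have hba : ¬ b ≤ a := fun h => by
    have := (T.strictMonoOn_entry.monotoneOn) hb ha h
    omega
  obtain ⟨a₁, a₂⟩ := a
  obtain ⟨b₁, b₂⟩ := b
  simp only [Prod.mk_le_mk, not_and_or, not_le] at hba ⊢
  rcases lt_trichotomy a₁ b₁ with h₁ | rfl | h₁
  · by_cases h₂ : a₂ ≤ b₂
    · refine Or.inr (Or.inr (Or.inl (hcover _ (μ.up_left_mem h₁ h₂ hb) ?_ ?_).symm))
      · exact Prod.mk_lt_mk.2 (Or.inl ⟨by omega, le_rfl⟩)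
      · exact Prod.mk_le_mk.2 ⟨h₁, h₂⟩
    · omega
  · refine Or.inr (Or.inr (Or.inr (hcover _ (μ.up_left_mem le_rfl (by omega) hb) ?_ ?_).symm))
    · exact Prod.mk_lt_mk.2 (Or.inr ⟨le_rfl, by omega⟩)
    · exact Prod.mk_le_mk.2 ⟨le_rfl, by omega⟩
  · omega

theorem cellContent_ne (T : SYT μ) {a b : ℕ × ℕ} (ha : a ∈ μ) (hb : b ∈ μ)
    (hab : T.entry b = T.entry a + 1) : cellContent a ≠ cellContent b := by
  rcases T.consecutive_cells ha hb hab with h | h | rfl | rfl <;> simp only [cellContent] <;> omega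

theorem desc_iff {T : SYT μ} {a b : ℕ × ℕ} {k : ℕ} (ha : a ∈ μ) (hb : b ∈ μ)
    (hak : T.entry a = k) (hbk : T.entry b = k + 1) :
    T.Desc k ↔ cellContent b < cellContent a := by
  have hrow : T.Desc k ↔ a.1 < b.1 := by
    refine ⟨fun ⟨a', b', ha', hb', hak', hbk', h⟩ => ?_, fun h => ⟨a, b, ha, hb, hak, hbk, h⟩⟩
    rwa [T.eq_of_entry_eq ha' ha (hak'.trans hak.symm),
      T.eq_of_entry_eq hb' hb (hbk'.trans hbk.symm)] at h
  rw [hrow]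
  rcases T.consecutive_cells ha hb (by omega) with h | h | rfl | rfl <;>
    simp only [cellContent] <;> omega

theorem not_lt_of_mem_uIoo (T : SYT μ) {a b : ℕ × ℕ} {x : ℤ} (ha : a ∈ μ) (hb : b ∈ μ)
    (hab : T.entry b = T.entry a + 1) (hx : x ∈ Set.uIoo (cellContent a) (cellContent b)) :
    ¬ a < b := by
  intro hlt
  simp only [Set.uIoo, Set.mem_Ioo, inf_lt_iff, lt_sup_iff] at hx
  rcases T.consecutive_cells ha hb hab with h | h | rfl | rfl
  · exact absurd (Prod.lt_iff.1 hlt) (by omega)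
  · exact absurd (Prod.lt_iff.1 hlt) (by omega)
  all_goals simp only [cellContent] at hx; omega

theorem swap_lt_swap {j u v : ℕ} (huv : u < v) (h : ¬ (u = j ∧ v = j + 1)) :
    Equiv.swap j (j + 1) u < Equiv.swap j (j + 1) v := by
  simp only [Equiv.swap_apply_def]
  split_ifs <;> omega

/-- By `consecutive_cells`, `¬ a < b` says that `j` and `j + 1` are not adjacent in a row or a
column. -/
theorem exists_swap (T : SYT μ) {a b : ℕ × ℕ} {j : ℕ} (ha : a ∈ μ) (hb : b ∈ μ)
    (haj : T.entry a = j) (hbj : T.entry b = j + 1) (hab : ¬ a < b) :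
    ∃ U : SYT μ, ∀ c, U.entry c = Equiv.swap j (j + 1) (T.entry c) := by
  have hj : 1 ≤ j := haj ▸ T.one_le_entry ha
  have hjμ : j + 1 ≤ μ.card := hbj ▸ (T.bijOn.mapsTo hb).2
  have hmaps : Set.MapsTo (Equiv.swap j (j + 1)) (Set.Icc 1 μ.card) (Set.Icc 1 μ.card) := by
    intro x hx
    simp only [Set.mem_Icc, Equiv.swap_apply_def] at hx ⊢
    split_ifs <;> omega
  have hbij : Set.BijOn (Equiv.swap j (j + 1)) (Set.Icc 1 μ.card) (Set.Icc 1 μ.card) :=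
    Set.InvOn.bijOn ⟨fun x _ => Equiv.swap_apply_self _ _ _, fun x _ => Equiv.swap_apply_self _ _ _⟩
      hmaps hmaps
  have hmono : ∀ c c', c ∈ μ → c' ∈ μ → c < c' →
      Equiv.swap j (j + 1) (T.entry c) < Equiv.swap j (j + 1) (T.entry c') := by
    refine fun c c' hc hc' hlt => swap_lt_swap (T.strictMonoOn_entry hc hc' hlt) ?_
    rintro ⟨h, h'⟩
    rw [T.eq_of_entry_eq hc ha (h.trans haj.symm), T.eq_of_entry_eq hc' hb (h'.trans hbj.symm)]
      at hlt
    exact hab hlt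
  refine ⟨⟨fun c => Equiv.swap j (j + 1) (T.entry c), hbij.comp T.bijOn, fun c hc => ?_,
    fun c c' hc hc' h₁ h₂ => hmono c c' hc hc' (Prod.lt_iff.2 (Or.inr ⟨h₁.le, h₂⟩)),
    fun c c' hc hc' h₂ h₁ => hmono c c' hc hc' (Prod.lt_iff.2 (Or.inl ⟨h₁, h₂.le⟩))⟩,
    fun c => rfl⟩
  rw [T.zero_of_not_mem c hc, Equiv.swap_apply_of_ne_of_ne (by omega) (by omega)]

theorem DKSwap.ne {T U : SYT μ} {j : ℕ} (h : T.DKSwap U j) : T ≠ U := by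
  obtain ⟨-, hE, a, -, -, -, -, -, ha, -⟩ := h
  intro hTU
  have := hE a
  rw [← hTU, ha, Equiv.swap_apply_left] at this
  omega

theorem desc_iff_desc_of_swap {T U : SYT μ} {j k : ℕ}
    (hE : ∀ c, U.entry c = Equiv.swap j (j + 1) (T.entry c)) (hk : k + 1 < j ∨ j + 1 < k) :
    T.Desc k ↔ U.Desc k := by
  have hfix : ∀ c v, (v = k ∨ v = k + 1) → (U.entry c = v ↔ T.entry c = v) := by
    intro c v hv
    rw [hE, Equiv.swap_apply_eq_iff, Equiv.swap_apply_of_ne_of_ne (by omega) (by omega)]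
  simp only [SYT.Desc, hfix _ k (Or.inl rfl), hfix _ (k + 1) (Or.inr rfl)]

theorem swap_index_of_activ {T U : SYT μ} {i j : ℕ}
    (hE : ∀ c, U.entry c = Equiv.swap j (j + 1) (T.entry c)) (h : T.Activ U i) :
    j = i ∨ j = i + 1 := by
  have hi : ¬ (T.Desc i ↔ U.Desc i) := by unfold SYT.Activ at h; tauto
  have hi' : ¬ (T.Desc (i + 1) ↔ U.Desc (i + 1)) := by unfold SYT.Activ at h; tauto
  by_contra hj
  rcases (by omega : i + 1 < j ∨ j + 1 < i + 1) with hj | hj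
  · exact hi (desc_iff_desc_of_swap hE (Or.inl hj))
  · exact hi' (desc_iff_desc_of_swap hE (by omega))

theorem activ_iff_of_swap {T U : SYT μ} {i : ℕ} {a b c : ℕ × ℕ}
    (hE : ∀ x, U.entry x = Equiv.swap i (i + 1) (T.entry x)) (ha : a ∈ μ) (hb : b ∈ μ)
    (hc : c ∈ μ) (hai : T.entry a = i) (hbi : T.entry b = i + 1) (hci : T.entry c = i + 2) :
    T.Activ U i ↔ cellContent c ∈ Set.uIoo (cellContent a) (cellContent b) := by
  have hUa : U.entry a = i + 1 := by rw [hE, hai, Equiv.swap_apply_left]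
  have hUb : U.entry b = i := by rw [hE, hbi, Equiv.swap_apply_right]
  have hUc : U.entry c = i + 2 := by
    rw [hE, hci, Equiv.swap_apply_of_ne_of_ne (by omega) (by omega)]
  have := T.cellContent_ne ha hb (by omega)
  have := T.cellContent_ne hb hc (by omega)
  have := U.cellContent_ne ha hc (by omega)
  rw [SYT.Activ, desc_iff ha hb hai hbi, desc_iff hb ha hUb hUa, desc_iff hb hc hbi hci,
    desc_iff ha hc hUa hUc]
  simp only [Set.uIoo, Set.mem_Ioo, inf_lt_iff, lt_sup_iff]
  omega

theorem activ_iff_of_swap_succ {T U : SYT μ} {i : ℕ} {a b c : ℕ × ℕ}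
    (hE : ∀ x, U.entry x = Equiv.swap (i + 1) (i + 2) (T.entry x)) (ha : a ∈ μ) (hb : b ∈ μ)
    (hc : c ∈ μ) (hai : T.entry a = i) (hbi : T.entry b = i + 1) (hci : T.entry c = i + 2) :
    T.Activ U i ↔ cellContent a ∈ Set.uIoo (cellContent b) (cellContent c) := by
  have hUa : U.entry a = i := by
    rw [hE, hai, Equiv.swap_apply_of_ne_of_ne (by omega) (by omega)]
  have hUb : U.entry b = i + 2 := by rw [hE, hbi, Equiv.swap_apply_left]
  have hUc : U.entry c = i + 1 := by rw [hE, hci, Equiv.swap_apply_right]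
  have := T.cellContent_ne ha hb (by omega)
  have := T.cellContent_ne hb hc (by omega)
  have := U.cellContent_ne ha hc (by omega)
  rw [SYT.Activ, desc_iff ha hb hai hbi, desc_iff ha hc hUa hUc, desc_iff hb hc hbi hci,
    desc_iff hc hb hUc hUb]
  simp only [Set.uIoo, Set.mem_Ioo, inf_lt_iff, lt_sup_iff]
  omega

def cellsLe (T : SYT μ) (k : ℕ) : Set (ℕ × ℕ) := {c | c ∈ μ ∧ T.entry c ≤ k}

theorem isLowerSet_cellsLe (T : SYT μ) (k : ℕ) : IsLowerSet (T.cellsLe k) :=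
  fun _ _ hba ⟨ha, hk⟩ =>
    ⟨μ.isLowerSet hba ha, (T.strictMonoOn_entry.monotoneOn (μ.isLowerSet hba ha) ha hba).trans hk⟩

theorem exists_maximal_cellsLe_between (T : SYT μ) {p q : ℕ × ℕ} {k : ℕ} (hp : p ∈ μ)
    (hq : q ∈ μ) (hpk : T.entry p = k + 1) (hqk : T.entry q = k + 2) (hpq : ¬ p < q) :
    ∃ g, Maximal (· ∈ T.cellsLe k) g ∧
      cellContent g ∈ Set.uIoo (cellContent p) (cellContent q) := by
  have hlt : ∀ {c y}, c ∈ μ → y < c → y ∈ μ ∧ T.entry y < T.entry c := fun hc hy =>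
    ⟨μ.isLowerSet hy.le hc, T.strictMonoOn_entry (μ.isLowerSet hy.le hc) hc hy⟩
  have hp' : Minimal (· ∉ T.cellsLe k) p := by
    refine minimal_iff_forall_lt.2 ⟨fun h => ?_, fun y hy => not_not.2 ⟨(hlt hp hy).1, ?_⟩⟩
    · have := h.2; omega
    · have := (hlt hp hy).2; omega
  have hq' : Minimal (· ∉ T.cellsLe k) q := by
    refine minimal_iff_forall_lt.2 ⟨fun h => ?_, fun y hy => not_not.2 ⟨(hlt hq hy).1, ?_⟩⟩
    · have := h.2; omega
    have hyp : y ≠ p := by rintro rfl; exact hpq hy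
    have hne : T.entry y ≠ k + 1 := fun h =>
      hyp (T.eq_of_entry_eq (hlt hq hy).1 hp (h.trans hpk.symm))
    have := (hlt hq hy).2
    omega
  have hgap : cellContent p + 2 ≤ cellContent q ∨ cellContent q + 2 ≤ cellContent p := by
    rcases T.consecutive_cells hp hq (by omega) with h | h | rfl | rfl
    · simp only [cellContent]; omega
    · simp only [cellContent]; omega
    · exact absurd (Prod.mk_lt_mk.2 (Or.inl ⟨Nat.lt_succ_self _, le_rfl⟩)) hpq
    · exact absurd (Prod.mk_lt_mk.2 (Or.inr ⟨le_rfl, Nat.lt_succ_self _⟩)) hpq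
  rcases hgap with h | h
  · obtain ⟨g, hg, h₁, h₂⟩ := exists_maximal_between (T.isLowerSet_cellsLe k) hp' hq' h
    exact ⟨g, hg, Set.mem_uIoo_of_lt h₁ h₂⟩
  · obtain ⟨g, hg, h₁, h₂⟩ := exists_maximal_between (T.isLowerSet_cellsLe k) hq' hp' h
    exact ⟨g, hg, Set.mem_uIoo_of_gt h₁ h₂⟩

end SYT

def stdAdjBelow (n : ℕ) (lam : YoungDiagram) (K : ℕ) (T U : SYT lam) : Prop :=
  ∃ i ∈ Set.Icc 1 K, i ∈ (stdSCG n lam).β T U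

theorem stdAdjBelow_mono {n : ℕ} {lam : YoungDiagram} {K K' : ℕ} (h : K ≤ K') :
    stdAdjBelow n lam K ≤ stdAdjBelow n lam K' :=
  fun _ _ ⟨i, hi, hiβ⟩ => ⟨i, ⟨hi.1, hi.2.trans h⟩, hiβ⟩

namespace stdSCG

variable {n : ℕ} {lam : YoungDiagram}

theorem exists_swap_of_mem_β {T U : SYT lam} {i : ℕ} (h : i ∈ (stdSCG n lam).β T U) :
    ∃ j, (j = i ∨ j = i + 1) ∧ ∀ c, U.entry c = Equiv.swap j (j + 1) (T.entry c) := by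
  obtain ⟨-, ⟨-, hdk⟩, hact⟩ := h
  rcases hdk with ⟨j, -, hE, -⟩ | ⟨j, -, hE, -⟩
  · exact ⟨j, SYT.swap_index_of_activ hE hact, hE⟩
  · have hE' : ∀ c, U.entry c = Equiv.swap j (j + 1) (T.entry c) := fun c => by
      rw [hE, Equiv.swap_apply_self]
    exact ⟨j, SYT.swap_index_of_activ hE' hact, hE'⟩

theorem entry_eq_of_mem_β {T U : SYT lam} {i : ℕ} (h : i ∈ (stdSCG n lam).β T U)
    {c : ℕ × ℕ} (hc : i + 2 < T.entry c) : U.entry c = T.entry c := by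
  obtain ⟨j, hj, hE⟩ := exists_swap_of_mem_β h
  rw [hE, Equiv.swap_apply_of_ne_of_ne (by omega) (by omega)]

theorem eq_of_mem_β_of_mem_β {Y W₁ W₂ : SYT lam} {i : ℕ} (hi : i + 2 ≤ lam.card)
    (h₁ : i ∈ (stdSCG n lam).β Y W₁) (h₂ : i ∈ (stdSCG n lam).β Y W₂) : W₁ = W₂ := by
  have hi₁ : 1 ≤ i := h₁.1.1
  obtain ⟨a, ha, hai⟩ := Y.exists_entry_eq hi₁ (by omega)
  obtain ⟨b, hb, hbi⟩ := Y.exists_entry_eq (k := i + 1) (by omega) (by omega)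
  obtain ⟨c, hc, hci⟩ := Y.exists_entry_eq (k := i + 2) (by omega) hi
  have hcross : ∀ {W W' : SYT lam}, i ∈ (stdSCG n lam).β Y W → i ∈ (stdSCG n lam).β Y W' →
      (∀ x, W.entry x = Equiv.swap i (i + 1) (Y.entry x)) →
      (∀ x, W'.entry x = Equiv.swap (i + 1) (i + 2) (Y.entry x)) → False := by
    intro W W' h h' hE hE'
    have := (SYT.activ_iff_of_swap hE ha hb hc hai hbi hci).1 h.2.2
    have := (SYT.activ_iff_of_swap_succ hE' ha hb hc hai hbi hci).1 h'.2.2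
    simp only [Set.uIoo, Set.mem_Ioo, inf_lt_iff, lt_sup_iff] at *
    omega
  obtain ⟨j₁, hj₁, hE₁⟩ := exists_swap_of_mem_β h₁
  obtain ⟨j₂, hj₂, hE₂⟩ := exists_swap_of_mem_β h₂
  rcases hj₁ with rfl | rfl <;> rcases hj₂ with rfl | rfl
  · exact SYT.ext (funext fun x => by rw [hE₁, hE₂])
  · exact (hcross h₁ h₂ hE₁ hE₂).elim
  · exact (hcross h₂ h₁ hE₂ hE₁).elim
  · exact SYT.ext (funext fun x => by rw [hE₁, hE₂])

theorem exists_swap_mem_β {T : SYT lam} {i : ℕ} {a b c : ℕ × ℕ} (ha : a ∈ lam)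
    (hb : b ∈ lam) (hc : c ∈ lam) (hai : T.entry a = i) (hbi : T.entry b = i + 1)
    (hci : T.entry c = i + 2) (hin : i ≤ n - 1)
    (hbetween : cellContent c ∈ Set.uIoo (cellContent a) (cellContent b)) :
    ∃ U : SYT lam, (∀ x, U.entry x = Equiv.swap i (i + 1) (T.entry x)) ∧
      i ∈ (stdSCG n lam).β T U := by
  have hi : 1 ≤ i := hai ▸ T.one_le_entry ha
  obtain ⟨U, hE⟩ := T.exists_swap ha hb hai hbi (T.not_lt_of_mem_uIoo ha hb (by omega) hbetween)
  have hdk : T.DKSwap U i := ⟨hi, hE, a, b, c, ha, hb, hc, hai, hbi, Or.inr hci, hbetween⟩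
  exact ⟨U, hE, ⟨hi, hin⟩, ⟨hdk.ne, Or.inl ⟨i, hdk⟩⟩,
    (SYT.activ_iff_of_swap hE ha hb hc hai hbi hci).2 hbetween⟩

theorem exists_swap_succ_mem_β {T : SYT lam} {i : ℕ} {a b c : ℕ × ℕ} (ha : a ∈ lam)
    (hb : b ∈ lam) (hc : c ∈ lam) (hai : T.entry a = i) (hbi : T.entry b = i + 1)
    (hci : T.entry c = i + 2) (hin : i ≤ n - 1)
    (hbetween : cellContent a ∈ Set.uIoo (cellContent b) (cellContent c)) :
    ∃ U : SYT lam, (∀ x, U.entry x = Equiv.swap (i + 1) (i + 2) (T.entry x)) ∧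
      i ∈ (stdSCG n lam).β T U := by
  have hi : 1 ≤ i := hai ▸ T.one_le_entry ha
  obtain ⟨U, hE⟩ := T.exists_swap hb hc hbi hci (T.not_lt_of_mem_uIoo hb hc (by omega) hbetween)
  have hdk : T.DKSwap U (i + 1) :=
    ⟨by omega, hE, b, c, a, hb, hc, ha, hbi, hci, Or.inl (by rw [hai]), hbetween⟩
  exact ⟨U, hE, ⟨hi, hin⟩, ⟨hdk.ne, Or.inl ⟨i + 1, hdk⟩⟩,
    (SYT.activ_iff_of_swap_succ hE ha hb hc hai hbi hci).2 hbetween⟩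

/-- First bring `k - 1` to the corner `e`. Then `e` and the cell `d` of `k` are addable to the
cells of entries `≤ k - 2`, so a corner `g` of those lies on a diagonal between them; bring `k - 2`
to `g`, and the dual Knuth move exchanging `k - 1` and `k`, witnessed by `k - 2`, finishes. -/
theorem exists_reflTransGen_entry_eq (k : ℕ) (hk : k ≤ lam.card) (hkn : k ≤ n + 1)
    (X : SYT lam) {e : ℕ × ℕ} (he : Maximal (· ∈ X.cellsLe k) e) :
    ∃ Y, Relation.ReflTransGen (stdAdjBelow n lam (k - 2)) X Y ∧ Y.entry e = k ∧
      ∀ c, k < X.entry c → Y.entry c = X.entry c := by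
  induction k using Nat.strong_induction_on generalizing X e with
  | _ k ih =>
  by_cases hek : X.entry e = k
  · exact ⟨X, .refl, hek, fun _ _ => rfl⟩
  obtain ⟨heμ, hele⟩ := he.1
  have := X.one_le_entry heμ
  obtain ⟨k, rfl⟩ : ∃ k', k = k' + 2 := ⟨k - 2, by omega⟩
  obtain ⟨d, hd, hdk⟩ := X.exists_entry_eq (k := k + 2) (by omega) hk
  obtain ⟨X₁, hp₁, he₁, hpres₁⟩ := ih (k + 1) (by omega) (by omega) (by omega) X
    (he.mono (fun c hc => ⟨hc.1, by have := hc.2; omega⟩) ⟨heμ, by omega⟩)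
  have hd₁ : X₁.entry d = k + 2 := (hpres₁ d (by omega)).trans hdk
  obtain ⟨g, hg, hgbetween⟩ :=
    X₁.exists_maximal_cellsLe_between heμ hd he₁ hd₁ (he.not_gt ⟨hd, hdk.le⟩)
  obtain ⟨X₂, hp₂, hg₂, hpres₂⟩ := ih k (by omega) (by omega) (by omega) X₁ hg
  have he₂ : X₂.entry e = k + 1 := (hpres₂ e (by omega)).trans he₁
  have hd₂ : X₂.entry d = k + 2 := (hpres₂ d (by omega)).trans hd₁
  obtain ⟨Y, hEY, hY⟩ :=
    exists_swap_succ_mem_β (n := n) hg.1.1 heμ hd hg₂ he₂ hd₂ (by omega) hgbetween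
  have hk₁ : 1 ≤ k := hg₂ ▸ X₂.one_le_entry hg.1.1
  refine ⟨Y, ?_, by rw [hEY, he₂, Equiv.swap_apply_left], fun c hc => ?_⟩
  · have hp₁' := Relation.ReflTransGen.mono (stdAdjBelow_mono (K' := k + 2 - 2) (by omega)) _ _ hp₁
    have hp₂' := Relation.ReflTransGen.mono (stdAdjBelow_mono (K' := k + 2 - 2) (by omega)) _ _ hp₂
    exact (hp₁'.trans hp₂').tail ⟨k, ⟨hk₁, by omega⟩, hY⟩
  · have h₁ := hpres₁ c (by omega)
    rw [hEY, hpres₂ c (by omega), h₁, Equiv.swap_apply_of_ne_of_ne (by omega) (by omega)]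

theorem entry_eq_of_mem_comp_restrict {X Z : SYT lam}
    (hZ : Z ∈ ((stdSCG n lam).restrict (n - 1)).comp X) {c : ℕ × ℕ} (hc : X.entry c = n + 1) :
    Z.entry c = n + 1 := by
  induction hZ with
  | refl => exact hc
  | tail _ hstep ih =>
    obtain ⟨-, i, hiβ, hi⟩ := hstep
    have := hi.1
    have := hi.2
    rw [entry_eq_of_mem_β hiβ (by rw [ih]; omega), ih]

/-- The entry `n + 1` cannot move inside an `n`-component. -/
theorem swap_eq_of_mem_β_of_mem_comp (hlam : lam.card = n + 1) {X Z : SYT lam}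
    (hXZ : n - 1 ∈ (stdSCG n lam).β X Z) (hZ : Z ∈ ((stdSCG n lam).restrict (n - 1)).comp X) :
    ∀ c, Z.entry c = Equiv.swap (n - 1) n (X.entry c) := by
  have hn : 2 ≤ n := by have := hXZ.1.1; omega
  obtain ⟨j, hj, hE⟩ := exists_swap_of_mem_β hXZ
  rcases hj with rfl | rfl
  · rwa [Nat.sub_add_cancel (by omega)] at hE
  · obtain ⟨r, hr, hrn⟩ := X.exists_entry_eq (k := n + 1) (by omega) hlam.ge
    have := entry_eq_of_mem_comp_restrict hZ hrn
    rw [hE, hrn, show n - 1 + 1 = n by omega, Equiv.swap_apply_right] at this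
    omega

theorem exists_reflTransGen_forall_mem_β_of_mem_uIoo {X : SYT lam} {m : ℕ} (hmn : m + 2 ≤ n)
    {p q r : ℕ × ℕ} (hp : p ∈ lam) (hq : q ∈ lam) (hr : r ∈ lam) (hpm : X.entry p = m + 1)
    (hqm : X.entry q = m + 2) (hrm : X.entry r = m + 3)
    (hbetween : cellContent r ∈ Set.uIoo (cellContent p) (cellContent q)) :
    ∃ Y, Relation.ReflTransGen (stdAdjBelow n lam (m - 2)) X Y ∧
      ∀ W, m + 1 ∈ (stdSCG n lam).β Y W → m ∈ (stdSCG n lam).β Y W := by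
  have hcard : m + 3 ≤ lam.card := hrm ▸ (X.bijOn.mapsTo hr).2
  obtain ⟨e, he, hebetween⟩ := X.exists_maximal_cellsLe_between hp hq hpm hqm
    (X.not_lt_of_mem_uIoo hp hq (by omega) hbetween)
  obtain ⟨Y, hpath, hYe, hpres⟩ :=
    exists_reflTransGen_entry_eq (n := n) m (by omega) (by omega) X he
  have hYp : Y.entry p = m + 1 := (hpres p (by omega)).trans hpm
  have hYq : Y.entry q = m + 2 := (hpres q (by omega)).trans hqm
  have hYr : Y.entry r = m + 3 := (hpres r (by omega)).trans hrm
  obtain ⟨W, hEW, hW⟩ := exists_swap_mem_β (n := n) hp hq hr hYp hYq hYr (by omega) hbetween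
  refine ⟨Y, hpath, fun W' hW' => ?_⟩
  rw [eq_of_mem_β_of_mem_β (by omega) hW' hW]
  have hm : 1 ≤ m := hYe ▸ Y.one_le_entry he.1.1
  exact ⟨⟨hm, by omega⟩, hW.2.1,
    (SYT.activ_iff_of_swap_succ hEW he.1.1 hp hq hYe hYp hYq).2 hebetween⟩

theorem exists_reflTransGen_forall_mem_β_pred (hlam : lam.card = n + 1) {X Z : SYT lam}
    (hXZ : n - 1 ∈ (stdSCG n lam).β X Z) (hZ : Z ∈ ((stdSCG n lam).restrict (n - 1)).comp X) :
    ∃ Y, Relation.ReflTransGen (stdAdjBelow n lam (n - 4)) X Y ∧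
      ∀ W, n - 1 ∈ (stdSCG n lam).β Y W → n - 2 ∈ (stdSCG n lam).β Y W := by
  have hE := swap_eq_of_mem_β_of_mem_comp hlam hXZ hZ
  have hn : 2 ≤ n := by have := hXZ.1.1; omega
  obtain ⟨m, rfl⟩ : ∃ m, n = m + 2 := ⟨n - 2, by omega⟩
  simp only [show m + 2 - 1 = m + 1 by omega, show m + 2 - 2 = m by omega,
    show m + 2 - 4 = m - 2 by omega] at hXZ hE ⊢
  obtain ⟨p, hp, hpm⟩ := X.exists_entry_eq (k := m + 1) (by omega) (by omega)
  obtain ⟨q, hq, hqm⟩ := X.exists_entry_eq (k := m + 2) (by omega) (by omega)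
  obtain ⟨r, hr, hrm⟩ := X.exists_entry_eq (k := m + 3) (by omega) (by omega)
  exact exists_reflTransGen_forall_mem_β_of_mem_uIoo le_rfl hp hq hr hpm hqm hrm
    ((SYT.activ_iff_of_swap hE hp hq hr hpm hqm hrm).1 hXZ.2.2)

end stdSCG

namespace SCG

variable {n : ℕ} {V : Type}

theorem comp_eq_of_mem (G : SCG n V) {a b : V} (h : b ∈ G.comp a) : G.comp a = G.comp b := by
  have : Std.Symm G.E := ⟨G.symm⟩
  ext c
  exact ⟨fun hc => (Std.Symm.symm _ _ h).trans hc, fun hc => Relation.ReflTransGen.trans h hc⟩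

theorem comp_eq_of_adj (G : SCG n V) {u v w z : V} (hw : w ∈ G.comp u) (hz : z ∈ G.comp v)
    (h : G.E w z) : G.comp u = G.comp v :=
  (G.comp_eq_of_mem (hw.tail h)).trans (G.comp_eq_of_mem hz).symm

theorem exists_lift_of_adj (G : SCG n V) {lam : YoungDiagram} (f : V → SYT lam) {u : V}
    (himg : f '' ((G.restrict (n - 1)).comp u) = ((stdSCG n lam).restrict (n - 1)).comp (f u))
    (hadj : ∀ w z : V, w ∈ (G.restrict (n - 1)).comp u → z ∈ (G.restrict (n - 1)).comp u →
      ((G.restrict (n - 1)).E w z ↔ ((stdSCG n lam).restrict (n - 1)).E (f w) (f z)))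
    {w : V} (hw : w ∈ (G.restrict (n - 1)).comp u) {Z : SYT lam}
    (h : ((stdSCG n lam).restrict (n - 1)).E (f w) Z) :
    ∃ w', w' ∈ (G.restrict (n - 1)).comp u ∧ f w' = Z ∧ (G.restrict (n - 1)).E w w' := by
  have hfw : f w ∈ ((stdSCG n lam).restrict (n - 1)).comp (f u) := himg ▸ ⟨w, hw, rfl⟩
  obtain ⟨w', hw', rfl⟩ : Z ∈ f '' ((G.restrict (n - 1)).comp u) := himg ▸ hfw.tail h
  exact ⟨w', hw', rfl, (hadj w w' hw hw').2 h⟩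

theorem exists_lift_of_reflTransGen (G : SCG n V) (h5 : ax5 G) {lam : YoungDiagram}
    (f : V → SYT lam) (hβ : ∀ u v : V, G.E u v → G.β u v = (stdSCG n lam).β (f u) (f v))
    {u v : V}
    (himg : f '' ((G.restrict (n - 1)).comp u) = ((stdSCG n lam).restrict (n - 1)).comp (f u))
    (hadj : ∀ w z : V, w ∈ (G.restrict (n - 1)).comp u → z ∈ (G.restrict (n - 1)).comp u →
      ((G.restrict (n - 1)).E w z ↔ ((stdSCG n lam).restrict (n - 1)).E (f w) (f z)))
    {x y : V} (hx : x ∈ (G.restrict (n - 1)).comp u) (hy : y ∈ (G.restrict (n - 1)).comp v)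
    (hxy : G.E x y) (hcol : n - 1 ∈ G.β x y) {Y : SYT lam}
    (hpath : Relation.ReflTransGen (stdAdjBelow n lam (n - 4)) (f x) Y) :
    ∃ x' y', x' ∈ (G.restrict (n - 1)).comp u ∧ y' ∈ (G.restrict (n - 1)).comp v ∧
      f x' = Y ∧ G.E x' y' ∧ n - 1 ∈ G.β x' y' := by
  induction hpath with
  | refl => exact ⟨x, y, hx, hy, rfl, hxy, hcol⟩
  | tail _ hstep ih =>
    obtain ⟨x', y', hx', hy', rfl, hxy', hcol'⟩ := ih
    obtain ⟨c, ⟨hc₁, hc₂⟩, hcβ⟩ := hstep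
    obtain ⟨x'', hx'', rfl, hxx''⟩ :=
      G.exists_lift_of_adj f himg hadj hx' ⟨hcβ.2.1, c, hcβ, hc₁, by omega⟩
    obtain ⟨y'', h₁, h₂, h₃, h₄⟩ := h5 (n - 1) c (by omega) y' x' x'' (G.symm _ _ hxy')
      (by rwa [G.β_symm]) hxx''.1 (by rwa [hβ _ _ hxx''.1])
    exact ⟨x'', y'', hx'', hy'.tail ⟨h₁, c, h₂, hc₁, by omega⟩, rfl, G.symm _ _ h₃,
      by rwa [G.β_symm]⟩

end SCG

theorem stmt_14_general {n : ℕ} {V : Type} (G : SCG n V)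
    (hW : IsWeakDEG G)
    (lam : YoungDiagram) (hlam : lam.card = n + 1) (f : V → SYT lam)
    (hβ : ∀ u v : V, G.E u v → G.β u v = (stdSCG n lam).β (f u) (f v))
    (hiso : ∀ v : V,
      Set.InjOn f ((G.restrict (n - 1)).comp v) ∧
      f '' ((G.restrict (n - 1)).comp v) = ((stdSCG n lam).restrict (n - 1)).comp (f v) ∧
      ∀ u w : V, u ∈ (G.restrict (n - 1)).comp v → w ∈ (G.restrict (n - 1)).comp v →
        ((G.restrict (n - 1)).E u w ↔ ((stdSCG n lam).restrict (n - 1)).E (f u) (f w))) :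
    ∀ u v : V,
      (G.restrict (n - 1)).comp u ≠ (G.restrict (n - 1)).comp v →
      f '' ((G.restrict (n - 1)).comp u) = f '' ((G.restrict (n - 1)).comp v) →
      ∀ x ∈ (G.restrict (n - 1)).comp u, ∀ y ∈ (G.restrict (n - 1)).comp v,
        ¬ (G.E x y ∧ (n - 1) ∈ G.β x y) := by
  intro u v hne himg x hx y hy ⟨hxy, hcol⟩
  have hfx : f x ∈ ((stdSCG n lam).restrict (n - 1)).comp (f u) := (hiso u).2.1 ▸ ⟨x, hx, rfl⟩
  have hfy : f y ∈ ((stdSCG n lam).restrict (n - 1)).comp (f x) := by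
    rw [← SCG.comp_eq_of_mem _ hfx, ← (hiso u).2.1, himg]
    exact ⟨y, hy, rfl⟩
  obtain ⟨Y, hpath, hY⟩ :=
    stdSCG.exists_reflTransGen_forall_mem_β_pred hlam (hβ x y hxy ▸ hcol) hfy
  obtain ⟨x', y', hx', hy', rfl, hxy', hcol'⟩ := G.exists_lift_of_reflTransGen hW.2.2.2.2 f hβ
    (hiso u).2.1 (hiso u).2.2 hx hy hxy hcol hpath
  have hlow : n - 2 ∈ G.β x' y' := (hβ x' y' hxy').symm ▸ hY _ (hβ x' y' hxy' ▸ hcol')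
  have hrange := G.β_sub x' y' hlow
  exact hne (SCG.comp_eq_of_adj _ hx' hy'
    ⟨hxy', n - 2, hlow, hrange.1, by have := hrange.2; omega⟩)

/-- Let `G` be a weak dual equivalence graph of type `n+1` whose `n`-components
are dual equivalence graphs, and let `φ = f` be a surjective morphism `G → G_λ`
restricting to an isomorphism on `n`-components.  Then two distinct
`n`-components with the same image under `φ` (i.e. both isomorphic to the same
`G_μ`) are not joined by an `(n-1)`-colored edge. -/
theorem stmt_14 {n : ℕ} {V : Type} (G : SCG n V)
    (hW : IsWeakDEG G)
    (hcomp : ∀ v : V, IsDEG ((G.restrict (n - 1)).induce ((G.restrict (n - 1)).comp v)))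
    (lam : YoungDiagram) (hlam : lam.card = n + 1) (f : V → SYT lam)
    (hτ : ∀ v : V, G.τ v = (stdSCG n lam).τ (f v))
    (hE : ∀ u v : V, G.E u v → (stdSCG n lam).E (f u) (f v))
    (hβ : ∀ u v : V, G.E u v → G.β u v = (stdSCG n lam).β (f u) (f v))
    (hsurj : Function.Surjective f)
    (hiso : ∀ v : V,
      Set.InjOn f ((G.restrict (n - 1)).comp v) ∧
      f '' ((G.restrict (n - 1)).comp v) = ((stdSCG n lam).restrict (n - 1)).comp (f v) ∧
      ∀ u w : V, u ∈ (G.restrict (n - 1)).comp v → w ∈ (G.restrict (n - 1)).comp v →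
        ((G.restrict (n - 1)).E u w ↔ ((stdSCG n lam).restrict (n - 1)).E (f u) (f w))) :
    ∀ u v : V,
      (G.restrict (n - 1)).comp u ≠ (G.restrict (n - 1)).comp v →
      f '' ((G.restrict (n - 1)).comp u) = f '' ((G.restrict (n - 1)).comp v) →
      ∀ x ∈ (G.restrict (n - 1)).comp u, ∀ y ∈ (G.restrict (n - 1)).comp v,
        ¬ (G.E x y ∧ (n - 1) ∈ G.β x y) :=
  stmt_14_general G hW lam hlam f hβ hiso
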